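/- arXiv:2207.03627 — 2 statements merged into one kernel-verified Lean document; each statement's English description precedes it below -/
import Mathlib

section
/- The edge expansion of the graph of the d-dimensional hypercube is at least 1: for every nonempty subset S of {0,1}^d with |S| ≤ 2^{d-1}, the number of hypercube edges with exactly one endpoint in S is at least |S|. -/
open scoped Classical

/-- Two vertices of the hypercube `{0,1}^d` are adjacent iff they differ in exactly
one coordinate. -/
def CubeAdj {d : ℕ} (u v : Fin d → Fin 2) : Prop :=
  (Finset.univ.filter fun i => u i ≠ v i).card = 1

/-!
The stronger, complement-symmetric bound `min |S| |Sᶜ| ≤ |δ(S)|` holds by induction on `d`: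
split `{0,1}^(d+1)` by the first coordinate into two copies of `{0,1}^d`. With slices
`S₀, S₁` of sizes `a, b` in a cube of `N` vertices, `δ(S)` contains `δ(S₀)`, `δ(S₁)` and the
matching edges from `S₀ \ S₁` and `S₁ \ S₀`, so
`|δ(S)| ≥ min(a, N - a) + min(b, N - b) + |a - b| ≥ min(a + b, 2N - a - b)`.
-/

namespace Hypercube

variable {d : ℕ}

noncomputable section

def edgeBoundary (S : Finset (Fin d → Fin 2)) : Finset ((Fin d → Fin 2) × (Fin d → Fin 2)) :=
  Finset.univ.filter fun e => e.1 ∈ S ∧ e.2 ∉ S ∧ CubeAdj e.1 e.2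

def slice (S : Finset (Fin (d + 1) → Fin 2)) (a : Fin 2) : Finset (Fin d → Fin 2) :=
  Finset.univ.filter fun x => Fin.cons a x ∈ S

def boundaryFiber (S : Finset (Fin (d + 1) → Fin 2)) (a b : Fin 2) :
    Finset ((Fin (d + 1) → Fin 2) × (Fin (d + 1) → Fin 2)) :=
  (edgeBoundary S).filter fun e => (e.1 0, e.2 0) = (a, b)

end

@[simp]
theorem mem_edgeBoundary {S : Finset (Fin d → Fin 2)} {e : (Fin d → Fin 2) × (Fin d → Fin 2)} :
    e ∈ edgeBoundary S ↔ e.1 ∈ S ∧ e.2 ∉ S ∧ CubeAdj e.1 e.2 := by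
  simp [edgeBoundary]

@[simp]
theorem mem_slice {S : Finset (Fin (d + 1) → Fin 2)} {a : Fin 2} {x : Fin d → Fin 2} :
    x ∈ slice S a ↔ Fin.cons a x ∈ S := by
  simp [slice]

@[simp]
theorem mem_boundaryFiber {S : Finset (Fin (d + 1) → Fin 2)} {a b : Fin 2}
    {e : (Fin (d + 1) → Fin 2) × (Fin (d + 1) → Fin 2)} :
    e ∈ boundaryFiber S a b ↔ e ∈ edgeBoundary S ∧ e.1 0 = a ∧ e.2 0 = b := by
  simp [boundaryFiber]

theorem cubeAdj_cons_cons_iff (a : Fin 2) (x y : Fin d → Fin 2) :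
    CubeAdj (Fin.cons a x : Fin (d + 1) → Fin 2) (Fin.cons a y) ↔ CubeAdj x y := by
  simp [CubeAdj, Finset.card_filter, Fin.sum_univ_succ]

theorem cubeAdj_cons_cons_of_ne {a b : Fin 2} (hab : a ≠ b) (x : Fin d → Fin 2) :
    CubeAdj (Fin.cons a x : Fin (d + 1) → Fin 2) (Fin.cons b x) := by
  simp [CubeAdj, Finset.card_filter, Fin.sum_univ_succ, hab]

theorem slice_compl (S : Finset (Fin (d + 1) → Fin 2)) (a : Fin 2) :
    slice Sᶜ a = (slice S a)ᶜ := by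
  ext x
  simp

theorem card_eq_card_slice_add_card_slice (S : Finset (Fin (d + 1) → Fin 2)) :
    S.card = (slice S 0).card + (slice S 1).card := by
  have hfiber (a : Fin 2) : (S.filter fun u => u 0 = a).card = (slice S a).card := by
    refine Finset.card_nbij' Fin.tail (fun x => (Fin.cons a x : Fin (d + 1) → Fin 2))
      ?_ ?_ ?_ ?_
    · intro u hu
      simp only [Finset.coe_filter, Set.mem_ofPred_eq] at hu
      simp [← hu.2, hu.1]
    · intro x hx
      simpa using hx
    · intro u hu
      simp only [Finset.coe_filter, Set.mem_ofPred_eq] at hu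
      simp [← hu.2]
    · intro x _
      simp
  rw [Finset.card_eq_sum_card_fiberwise (f := fun u => u 0) (t := Finset.univ)
    (fun _ _ => Finset.mem_coe.2 (Finset.mem_univ _)), Fin.sum_univ_two, hfiber, hfiber]

theorem card_edgeBoundary_slice_le (S : Finset (Fin (d + 1) → Fin 2)) (a : Fin 2) :
    (edgeBoundary (slice S a)).card ≤ (boundaryFiber S a a).card := by
  refine Finset.card_le_card_of_injOn
    (fun p => ((Fin.cons a p.1 : Fin (d + 1) → Fin 2), Fin.cons a p.2)) ?_ ?_
  · rintro ⟨x, y⟩ hxy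
    simp only [Finset.mem_coe, mem_edgeBoundary, mem_slice] at hxy
    simp [hxy.1, hxy.2.1, (cubeAdj_cons_cons_iff a x y).2 hxy.2.2]
  · rintro ⟨x, y⟩ - ⟨x', y'⟩ - h
    simpa using h

theorem card_sdiff_slice_le (S : Finset (Fin (d + 1) → Fin 2)) {a b : Fin 2} (hab : a ≠ b) :
    (slice S a \ slice S b).card ≤ (boundaryFiber S a b).card := by
  refine Finset.card_le_card_of_injOn
    (fun x => ((Fin.cons a x : Fin (d + 1) → Fin 2), Fin.cons b x)) ?_ ?_
  · intro x hx
    simp only [Finset.coe_sdiff, Set.mem_sdiff, Finset.mem_coe, mem_slice] at hx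
    simp [hx.1, hx.2, cubeAdj_cons_cons_of_ne hab x]
  · intro x _ x' _ h
    simpa using h

theorem card_edgeBoundary_slices_le (S : Finset (Fin (d + 1) → Fin 2)) :
    (edgeBoundary (slice S 0)).card + (edgeBoundary (slice S 1)).card
        + (slice S 0 \ slice S 1).card + (slice S 1 \ slice S 0).card
      ≤ (edgeBoundary S).card := by
  have hsum : (edgeBoundary S).card = ∑ p : Fin 2 × Fin 2, (boundaryFiber S p.1 p.2).card :=
    Finset.card_eq_sum_card_fiberwise (fun _ _ => Finset.mem_coe.2 (Finset.mem_univ _))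
  simp only [hsum, Fintype.sum_prod_type, Fin.sum_univ_two]
  have h00 := card_edgeBoundary_slice_le S 0
  have h11 := card_edgeBoundary_slice_le S 1
  have h01 := card_sdiff_slice_le S (a := 0) (b := 1) (by decide)
  have h10 := card_sdiff_slice_le S (a := 1) (b := 0) (by decide)
  omega

theorem min_card_card_compl_le_card_edgeBoundary :
    ∀ {d : ℕ} (S : Finset (Fin d → Fin 2)), min S.card Sᶜ.card ≤ (edgeBoundary S).card
  | 0, S => by
    have h := Finset.card_add_card_compl S
    simp only [Fintype.card_pi, Finset.prod_const, Finset.card_univ, Fintype.card_fin,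
      pow_zero] at h
    omega
  | d + 1, S => by
    have ih0 := min_card_card_compl_le_card_edgeBoundary (slice S 0)
    have ih1 := min_card_card_compl_le_card_edgeBoundary (slice S 1)
    have hS := card_eq_card_slice_add_card_slice S
    have hSc := card_eq_card_slice_add_card_slice Sᶜ
    rw [slice_compl, slice_compl] at hSc
    have hN0 := Finset.card_add_card_compl (slice S 0)
    have hN1 := Finset.card_add_card_compl (slice S 1)
    have hd01 := Finset.le_card_sdiff (slice S 1) (slice S 0)
    have hd10 := Finset.le_card_sdiff (slice S 0) (slice S 1)
    have hE := card_edgeBoundary_slices_le S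
    omega

end Hypercube

theorem cube_edge_expansion_general (d : ℕ) (S : Finset (Fin d → Fin 2))
    (hhalf : 2 * S.card ≤ 2 ^ d) :
    S.card ≤
      ((Finset.univ : Finset ((Fin d → Fin 2) × (Fin d → Fin 2))).filter
        fun e => e.1 ∈ S ∧ e.2 ∉ S ∧ CubeAdj e.1 e.2).card := by
  have hcompl : Sᶜ.card = 2 ^ d - S.card := by
    rw [Finset.card_compl, Fintype.card_fun, Fintype.card_fin, Fintype.card_fin]
  have hmin : min S.card Sᶜ.card = S.card := by omega
  exact hmin ▸ Hypercube.min_card_card_compl_le_card_edgeBoundary S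

/-- Edge expansion of the hypercube graph is at least 1: for every nonempty
`S ⊆ {0,1}^d` with `|S| ≤ 2^(d-1)`, the number of cube edges with exactly one
endpoint in `S` (counted as ordered pairs `(u, v)` with `u ∈ S`, `v ∉ S`) is at
least `|S|`. -/
theorem cube_edge_expansion (d : ℕ) (S : Finset (Fin d → Fin 2))
    (hS : S.Nonempty) (hhalf : 2 * S.card ≤ 2 ^ d) :
    S.card ≤
      ((Finset.univ : Finset ((Fin d → Fin 2) × (Fin d → Fin 2))).filter
        fun e => e.1 ∈ S ∧ e.2 ∉ S ∧ CubeAdj e.1 e.2).card :=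
  cube_edge_expansion_general d S hhalf
end

section
/- Projection lemma: Let P ⊂ ℝ^d be a 0/1 polytope and suppose there exist k coordinates such that the orthogonal projection π_k onto these coordinates satisfies: (1) every vertex of the k-cube {0,1}^k is the image of at least one vertex of P, and (2) for every vertex v of the k-cube, at most c vertices of P project to v. Then the edge expansion of the graph of P is at least 1/(2c). -/
open scoped BigOperators

def IsFaceOf {d : ℕ} (P F : Set (Fin d → ℝ)) : Prop :=
  ∃ (c : Fin d → ℝ) (c₀ : ℝ), (∀ x ∈ P, ∑ i, c i * x i ≤ c₀) ∧
    F = {x ∈ P | ∑ i, c i * x i = c₀}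

def IsVertexOf {d : ℕ} (P : Set (Fin d → ℝ)) (v : Fin d → ℝ) : Prop := IsFaceOf P {v}

def IsEdgeOf {d : ℕ} (P : Set (Fin d → ℝ)) (u v : Fin d → ℝ) : Prop :=
  u ≠ v ∧ IsFaceOf P (segment ℝ u v)

/-- The vertex set of `P`. -/
def polyVerts {d : ℕ} (P : Set (Fin d → ℝ)) : Set (Fin d → ℝ) := {v | IsVertexOf P v}

/-- The number of edges of `P` with exactly one endpoint in `S`, counted as ordered
pairs `(u, v)` with `u ∈ S` and `v ∉ S`, so each crossing edge is counted once. -/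
noncomputable def cutCard {d : ℕ} (P S : Set (Fin d → ℝ)) : ℕ :=
  {e : (Fin d → ℝ) × (Fin d → ℝ) | IsEdgeOf P e.1 e.2 ∧ e.1 ∈ S ∧ e.2 ∉ S}.ncard

/-- The edge expansion of the graph of `P` is at least `α`. -/
def ExpansionAtLeast {d : ℕ} (P : Set (Fin d → ℝ)) (α : ℝ) : Prop :=
  ∀ S : Set (Fin d → ℝ), S ⊆ polyVerts P → S.Nonempty →
    2 * S.ncard ≤ (polyVerts P).ncard → α * S.ncard ≤ cutCard P S

/-!
The vertices of the 0/1 polytope `P = conv F` are exactly the points of `F`, and faces of `P` have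
connected graphs: from a vertex of a face that does not maximize a linear functional on the face,
some edge of `P` inside the face improves it. This simplex step is found by induction on the size
of the face, tilting the functional `x ↦ ∑ (2 v_i - 1) x_i` that exposes the 0/1 vertex `v`.

Given `S`, call a cube vertex full if its fiber lies in `S`, and split if its fiber meets both `S`
and its complement. A split fiber contains an edge leaving `S`, and each cube edge leaving the
full set lifts to an edge leaving `S` between the two fibers, all these edges being distinct.
Fibers have at most `c` points, so `|S| ≤ c (#full + #split)` and `|S| ≤ |V \ S| ≤ c #(not full)`,
and the edge-isoperimetric inequality of the cube, `min (#A) (#Aᶜ) ≤ |∂A|`, gives `|S| ≤ c |δ(S)|`.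
-/

open Finset

section Maximizers

variable {α : Type*}

open Classical in
noncomputable def maximizers (f : α → ℝ) (F : Finset α) : Finset α :=
  {y ∈ F | ∀ z ∈ F, f z ≤ f y}

variable {f g : α → ℝ} {F G : Finset α} {u : α}

@[simp]
lemma mem_maximizers : u ∈ maximizers f F ↔ u ∈ F ∧ ∀ z ∈ F, f z ≤ f u := by
  classical
  unfold maximizers
  rw [mem_filter]

lemma maximizers_subset : maximizers f F ⊆ F := fun _ hu ↦ (mem_maximizers.1 hu).1

lemma maximizers_nonempty (hF : F.Nonempty) : (maximizers f F).Nonempty := by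
  obtain ⟨y, hy, hmax⟩ := F.exists_max_image f hF
  exact ⟨y, mem_maximizers.2 ⟨hy, hmax⟩⟩

lemma apply_eq_of_mem_maximizers {y z : α} (hy : y ∈ maximizers f F) (hz : z ∈ maximizers f F) :
    f y = f z :=
  le_antisymm ((mem_maximizers.1 hz).2 y (mem_maximizers.1 hy).1)
    ((mem_maximizers.1 hy).2 z (mem_maximizers.1 hz).1)

lemma maximizers_eq_filter (hu : u ∈ maximizers f F) :
    maximizers f F = {y ∈ F | f y = f u} := by
  ext y
  refine ⟨fun hy ↦ mem_filter.2 ⟨maximizers_subset hy, apply_eq_of_mem_maximizers hy hu⟩,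
    fun hy ↦ ?_⟩
  rw [mem_filter] at hy
  exact mem_maximizers.2 ⟨hy.1, fun z hz ↦ hy.2 ▸ (mem_maximizers.1 hu).2 z hz⟩

lemma exists_maximizers_eq_maximizers_maximizers (f g : α → ℝ) (F : Finset α) :
    ∃ A : ℝ, maximizers (fun x ↦ A * f x + g x) F = maximizers g (maximizers f F) := by
  classical
  set G := maximizers f F
  have hgap : ∀ y ∈ F, y ∉ G → ∀ z ∈ G, f y < f z := fun y hy hyG z hz ↦ by
    obtain ⟨w, hw, hyw⟩ : ∃ w ∈ F, f y < f w := by simpa [G, hy] using hyG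
    exact hyw.trans_le ((mem_maximizers.1 hz).2 w hw)
  obtain ⟨A, hA⟩ : ∃ A : ℝ, ∀ p ∈ (F \ G) ×ˢ G, (g p.1 - g p.2) / (f p.2 - f p.1) ≤ A := by
    obtain ⟨A, hA⟩ := (((F \ G) ×ˢ G).image fun p ↦ (g p.1 - g p.2) / (f p.2 - f p.1)).exists_le
    exact ⟨A, fun p hp ↦ hA _ (mem_image_of_mem _ hp)⟩
  have hout : ∀ y ∈ F, y ∉ G → ∀ z ∈ G, (A + 1) * f y + g y < (A + 1) * f z + g z := by
    intro y hy hyG z hz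
    have hpos := sub_pos.2 (hgap y hy hyG z hz)
    have := (div_le_iff₀ hpos).1 (hA (y, z) (mem_product.2 ⟨mem_sdiff.2 ⟨hy, hyG⟩, hz⟩))
    nlinarith
  refine ⟨A + 1, ?_⟩
  ext y
  simp only [mem_maximizers (f := g)]
  constructor
  · intro hy
    rw [mem_maximizers] at hy
    have hyG : y ∈ G := by
      by_contra hyG
      obtain ⟨z, hz⟩ := maximizers_nonempty (f := f) ⟨y, hy.1⟩
      exact (hout y hy.1 hyG z hz).not_ge (hy.2 z (maximizers_subset hz))
    refine ⟨hyG, fun z hz ↦ ?_⟩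
    have := hy.2 z (maximizers_subset hz)
    rw [apply_eq_of_mem_maximizers hz hyG] at this
    linarith
  · rintro ⟨hyG, hymax⟩
    refine mem_maximizers.2 ⟨maximizers_subset hyG, fun z hz ↦ ?_⟩
    by_cases hzG : z ∈ G
    · rw [apply_eq_of_mem_maximizers hzG hyG]
      linarith [hymax z hzG]
    · exact (hout z hz hzG y hyG).le

lemma lt_of_maximizers_eq_singleton (hu : maximizers f G = {u}) {y : α} (hy : y ∈ G)
    (hyu : y ≠ u) : f y < f u := by
  have huG : u ∈ maximizers f G := hu ▸ mem_singleton_self u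
  refine ((mem_maximizers.1 huG).2 y hy).lt_of_ne fun h ↦ hyu ?_
  have : y ∈ maximizers f G := mem_maximizers.2 ⟨hy, fun z hz ↦ h ▸ (mem_maximizers.1 huG).2 z hz⟩
  simpa [hu] using this

/-- The tilt `t` is the first one at which a point improving `g` catches up with `u`. -/
lemma exists_maximizers_tilt (hu : maximizers f G = {u}) (hg : ∃ z ∈ G, g u < g z) :
    ∃ t : ℝ, u ∈ maximizers (fun x ↦ f x + t * g x) G ∧
      (∃ z ∈ maximizers (fun x ↦ f x + t * g x) G, g u < g z) ∧
      ∀ y ∈ maximizers (fun x ↦ f x + t * g x) G, y ≠ u → g u < g y := by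
  classical
  have huG : u ∈ G := maximizers_subset (hu ▸ mem_singleton_self u)
  have hne_of_lt : ∀ {z}, g u < g z → z ≠ u := fun h hzu ↦ h.ne (congrArg g hzu).symm
  obtain ⟨z₀, hz₀, hmin⟩ := (G.filter fun z ↦ g u < g z).exists_min_image
    (fun z ↦ (f u - f z) / (g z - g u)) (by simpa [Finset.Nonempty] using hg)
  rw [mem_filter] at hz₀
  set t := (f u - f z₀) / (g z₀ - g u)
  have ht : 0 < t := div_pos (sub_pos.2 (lt_of_maximizers_eq_singleton hu hz₀.1 (hne_of_lt hz₀.2)))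
    (sub_pos.2 hz₀.2)
  have hle : ∀ y ∈ G, f y + t * g y ≤ f u + t * g u := by
    intro y hy
    by_cases hyg : g u < g y
    · have := (le_div_iff₀ (sub_pos.2 hyg)).1 (hmin y (mem_filter.2 ⟨hy, hyg⟩))
      linarith
    · obtain rfl | hyu := eq_or_ne y u
      · rfl
      have := lt_of_maximizers_eq_singleton hu hy hyu
      nlinarith
  have hu' : u ∈ maximizers (fun x ↦ f x + t * g x) G := mem_maximizers.2 ⟨huG, hle⟩
  refine ⟨t, hu', ⟨z₀, mem_maximizers.2 ⟨hz₀.1, fun y hy ↦ ?_⟩, hz₀.2⟩, fun y hy hyu ↦ ?_⟩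
  · have : t * (g z₀ - g u) = f u - f z₀ := div_mul_cancel₀ _ (sub_pos.2 hz₀.2).ne'
    linarith [hle y hy]
  · by_contra! hyg
    have := lt_of_maximizers_eq_singleton hu (maximizers_subset hy) hyu
    have := apply_eq_of_mem_maximizers hy hu'
    nlinarith

end Maximizers

section ConvexHull

variable {E : Type*} [AddCommGroup E] [Module ℝ E]

/-- A convex combination of points of `F` reaching the level can only use points on it. -/
lemma sep_convexHull_eq_convexHull_filter (F : Finset E) (l : E →ₗ[ℝ] ℝ) {c₀ : ℝ}
    (h : ∀ x ∈ F, l x ≤ c₀) :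
    {x ∈ convexHull ℝ (F : Set E) | l x = c₀} = convexHull ℝ ↑{x ∈ F | l x = c₀} := by
  classical
  apply Set.Subset.antisymm
  · rintro x ⟨hx, hlx⟩
    obtain ⟨w, hw₀, hw₁, rfl⟩ := Finset.mem_convexHull'.1 hx
    have hzero : ∀ y ∈ F, w y * (c₀ - l y) = 0 := by
      refine (sum_eq_zero_iff_of_nonneg fun y hy ↦
        mul_nonneg (hw₀ y hy) (sub_nonneg.2 (h y hy))).1 ?_
      simp only [map_sum, map_smul, smul_eq_mul] at hlx
      simp only [mul_sub, sum_sub_distrib, ← sum_mul, hw₁, one_mul, hlx, sub_self]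
    have hsupp : ∀ y ∈ F, w y ≠ 0 → l y = c₀ := fun y hy hwy ↦
      (sub_eq_zero.1 ((mul_eq_zero.1 (hzero y hy)).resolve_left hwy)).symm
    refine Finset.mem_convexHull'.2 ⟨w, fun y hy ↦ hw₀ y (mem_filter.1 hy).1, ?_, ?_⟩
    · rw [sum_filter_of_ne hsupp, hw₁]
    · exact sum_filter_of_ne fun y hy hwy ↦ hsupp y hy fun h0 ↦ hwy (by rw [h0, zero_smul])
  · refine convexHull_min (fun x hx ↦ ?_) ((convex_convexHull ℝ _).inter
      (convex_hyperplane l.isLinear c₀))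
    rw [mem_coe, mem_filter] at hx
    exact ⟨subset_convexHull ℝ _ hx.1, hx.2⟩

lemma left_mem_extremePoints_segment {u v : E} (h : u ≠ v) :
    u ∈ (segment ℝ u v).extremePoints ℝ := by
  have hinj := AffineMap.lineMap_injective ℝ h
  have hsdiff : segment ℝ u v \ {u} = AffineMap.lineMap u v '' Set.Ioc (0 : ℝ) 1 := by
    rw [segment_eq_image_lineMap]
    ext x
    constructor
    · rintro ⟨⟨t, ht, rfl⟩, hne⟩
      refine ⟨t, ⟨ht.1.lt_of_ne fun h0 ↦ hne ?_, ht.2⟩, rfl⟩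
      simp [← h0]
    · rintro ⟨t, ht, rfl⟩
      refine ⟨⟨t, Set.Ioc_subset_Icc_self ht, rfl⟩, fun hu ↦ ht.1.ne' (hinj ?_)⟩
      simpa using hu
  rw [(convex_segment u v).mem_extremePoints_iff_convex_sdiff, hsdiff]
  exact ⟨left_mem_segment ℝ u v, (convex_Ioc 0 1).affine_image _⟩

end ConvexHull

section Faces

variable {d : ℕ} {F G H : Finset (Fin d → ℝ)} {u v : Fin d → ℝ}

lemma isFaceOf_convexHull_filter (F : Finset (Fin d → ℝ)) (c : Fin d → ℝ) {c₀ : ℝ}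
    (h : ∀ x ∈ F, c ⬝ᵥ x ≤ c₀) :
    IsFaceOf (convexHull ℝ ↑F) (convexHull ℝ (F.filter (c ⬝ᵥ · = c₀) : Set (Fin d → ℝ))) :=
  ⟨c, c₀, convexHull_min h (convex_halfSpace_le (dotProductBilin ℝ ℝ c).isLinear c₀),
    (sep_convexHull_eq_convexHull_filter F (dotProductBilin ℝ ℝ c) h).symm⟩

lemma IsFaceOf.extremePoints_subset {T : Set (Fin d → ℝ)} (hT : IsFaceOf (convexHull ℝ ↑F) T) :
    T.extremePoints ℝ ⊆ F := by
  obtain ⟨c, c₀, hle, rfl⟩ := hT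
  refine (sep_convexHull_eq_convexHull_filter F (dotProductBilin ℝ ℝ c)
    (fun x hx ↦ hle x (subset_convexHull ℝ _ hx)) ▸ extremePoints_convexHull_subset).trans ?_
  exact coe_subset.2 (filter_subset _ _)

lemma IsVertexOf.mem (h : IsVertexOf (convexHull ℝ ↑F) v) : v ∈ F :=
  h.extremePoints_subset (by rw [extremePoints_singleton]; rfl)

lemma IsEdgeOf.symm {P : Set (Fin d → ℝ)} (h : IsEdgeOf P u v) : IsEdgeOf P v u :=
  ⟨h.1.symm, segment_symm ℝ u v ▸ h.2⟩

lemma IsEdgeOf.left_mem (h : IsEdgeOf (convexHull ℝ ↑F) u v) : u ∈ F :=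
  h.2.extremePoints_subset (left_mem_extremePoints_segment h.1)

lemma IsEdgeOf.right_mem (h : IsEdgeOf (convexHull ℝ ↑F) u v) : v ∈ F :=
  h.symm.left_mem

def IsBinary (x : Fin d → ℝ) : Prop := ∀ i, x i = 0 ∨ x i = 1

def IsExposedSubset (F G : Finset (Fin d → ℝ)) : Prop :=
  ∃ c : Fin d → ℝ, maximizers (c ⬝ᵥ ·) F = G

lemma IsExposedSubset.subset (h : IsExposedSubset F G) : G ⊆ F := by
  obtain ⟨c, rfl⟩ := h
  exact maximizers_subset

lemma IsExposedSubset.trans (hGH : IsExposedSubset G H) (hFG : IsExposedSubset F G) :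
    IsExposedSubset F H := by
  obtain ⟨q, rfl⟩ := hFG
  obtain ⟨r, rfl⟩ := hGH
  obtain ⟨A, hA⟩ := exists_maximizers_eq_maximizers_maximizers (q ⬝ᵥ ·) (r ⬝ᵥ ·) F
  exact ⟨A • q + r, by simpa [add_dotProduct, smul_dotProduct] using hA⟩

lemma IsExposedSubset.isFaceOf (h : IsExposedSubset F G) (hG : G.Nonempty) :
    IsFaceOf (convexHull ℝ ↑F) (convexHull ℝ (G : Set (Fin d → ℝ))) := by
  obtain ⟨c, rfl⟩ := h
  obtain ⟨u, hu⟩ := hG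
  have := isFaceOf_convexHull_filter F c (c₀ := c ⬝ᵥ u) (mem_maximizers.1 hu).2
  rwa [← maximizers_eq_filter hu] at this

lemma IsExposedSubset.isEdgeOf (h : IsExposedSubset F {u, v}) (huv : u ≠ v) :
    IsEdgeOf (convexHull ℝ ↑F) u v := by
  have := h.isFaceOf (insert_nonempty u {v})
  rw [coe_pair, convexHull_pair] at this
  exact ⟨huv, this⟩

/-- On binary points, `x ↦ ∑ i ∈ I, (2 v i - 1) x i` is maximal exactly where `x` agrees with `v`
on `I`. -/
lemma isExposedSubset_filter_forall_eq (hF : ∀ x ∈ F, IsBinary x) (hv : v ∈ F)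
    (I : Finset (Fin d)) : IsExposedSubset F {x ∈ F | ∀ i ∈ I, x i = v i} := by
  classical
  set c : Fin d → ℝ := fun i ↦ if i ∈ I then 2 * v i - 1 else 0
  have hle : ∀ x ∈ F, ∀ i, c i * x i ≤ c i * v i := fun x hx i ↦ by
    rcases hF x hx i with h | h <;> rcases hF v hv i with h' | h' <;> by_cases hi : i ∈ I <;>
      simp [c, h, h', hi]
  have hmax : v ∈ maximizers (c ⬝ᵥ ·) F :=
    mem_maximizers.2 ⟨hv, fun x hx ↦ sum_le_sum fun i _ ↦ hle x hx i⟩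
  refine ⟨c, (maximizers_eq_filter hmax).trans (filter_congr fun x hx ↦ ?_)⟩
  simp only [dotProduct]
  rw [sum_eq_sum_iff_of_le fun i _ ↦ hle x hx i]
  refine ⟨fun h i hi ↦ ?_, fun h i _ ↦ ?_⟩
  · have hc : c i ≠ 0 := by rcases hF v hv i with h' | h' <;> norm_num [c, hi, h']
    exact mul_left_cancel₀ hc (h i (mem_univ i))
  · by_cases hi : i ∈ I
    · rw [h i hi]
    · simp [c, hi]

lemma isExposedSubset_singleton (hF : ∀ x ∈ F, IsBinary x) (hv : v ∈ F) :
    IsExposedSubset F {v} := by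
  convert isExposedSubset_filter_forall_eq hF hv univ
  ext x
  simp only [mem_singleton, mem_filter, mem_univ, forall_const, ← funext_iff]
  exact ⟨fun h ↦ ⟨h ▸ hv, h⟩, And.right⟩

lemma isVertexOf_convexHull (hF : ∀ x ∈ F, IsBinary x) (hv : v ∈ F) :
    IsVertexOf (convexHull ℝ ↑F) v := by
  have := (isExposedSubset_singleton hF hv).isFaceOf (singleton_nonempty v)
  rwa [coe_singleton, convexHull_singleton] at this

lemma polyVerts_convexHull (hF : ∀ x ∈ F, IsBinary x) :
    polyVerts (convexHull ℝ ↑F) = (F : Set (Fin d → ℝ)) :=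
  Set.ext fun _ ↦ ⟨IsVertexOf.mem, isVertexOf_convexHull hF⟩

section ImprovingEdge

variable {l : Fin d → ℝ}

lemma IsExposedSubset.exists_subset_forall_lt (hF : ∀ x ∈ F, IsBinary x)
    (hG : IsExposedSubset F G) (hu : u ∈ G) (hl : ∃ z ∈ G, l ⬝ᵥ u < l ⬝ᵥ z) :
    ∃ G' ⊆ G, IsExposedSubset F G' ∧ u ∈ G' ∧ (∃ z ∈ G', l ⬝ᵥ u < l ⬝ᵥ z) ∧
      ∀ y ∈ G', y ≠ u → l ⬝ᵥ u < l ⬝ᵥ y := by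
  obtain ⟨c, hc⟩ := isExposedSubset_singleton (fun x hx ↦ hF x (hG.subset hx)) hu
  obtain ⟨t, htu, htz, hty⟩ := exists_maximizers_tilt hc hl
  refine ⟨_, maximizers_subset, IsExposedSubset.trans ⟨c + t • l, ?_⟩ hG, htu, htz, hty⟩
  simp [add_dotProduct, smul_dotProduct]

/-- A coordinate on which two other binary points differ separates `u` from exactly one of them. -/
lemma exists_dotProduct_lt_and_le (hG : ∀ x ∈ G, IsBinary x) (hu : u ∈ G) (hG3 : 2 < #G) :
    ∃ l : Fin d → ℝ, (∃ z ∈ G, l ⬝ᵥ u < l ⬝ᵥ z) ∧ ∃ b ∈ G, b ≠ u ∧ l ⬝ᵥ b ≤ l ⬝ᵥ u := by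
  obtain ⟨z₁, hz₁, z₂, hz₂, h₁₂⟩ := one_lt_card.1 (by rw [card_erase_of_mem hu]; omega :
    1 < #(G.erase u))
  rw [mem_erase] at hz₁ hz₂
  obtain ⟨i, hi⟩ := Function.ne_iff.1 h₁₂
  have key : ∀ a ∈ G, ∀ b ∈ G, b ≠ u → a i ≠ u i → b i = u i →
      ∃ l : Fin d → ℝ, (∃ z ∈ G, l ⬝ᵥ u < l ⬝ᵥ z) ∧ ∃ b ∈ G, b ≠ u ∧ l ⬝ᵥ b ≤ l ⬝ᵥ u :=
    fun a ha b hb hbu hai hbi ↦ ⟨Pi.single i (a i - u i),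
      ⟨a, ha, by nlinarith [single_dotProduct (v := u) (a i - u i) i,
        single_dotProduct (v := a) (a i - u i) i, sq_pos_of_ne_zero (sub_ne_zero.2 hai)]⟩,
      b, hb, hbu, by simp [single_dotProduct, hbi]⟩
  by_cases h₂ : z₂ i = u i
  · exact key z₁ hz₁.2 z₂ hz₂.2 hz₂.1 (fun h ↦ hi (h.trans h₂.symm)) h₂
  · refine key z₂ hz₂.2 z₁ hz₁.2 hz₁.1 h₂ ?_
    rcases hG u hu i with h | h <;> rcases hG z₁ hz₁.2 i with h' | h' <;>
      rcases hG z₂ hz₂.2 i with h'' | h'' <;> simp_all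

/-- A simplex step. Tilting the functional exposing `u` shrinks `G` to a face on which every other
point improves `l`; if more than two points remain, a coordinate functional shrinks it further
while keeping `u`, and an edge found there by induction still improves `l`. -/
theorem exists_isEdgeOf_dotProduct_lt (hF : ∀ x ∈ F, IsBinary x) (hG : IsExposedSubset F G)
    (hu : u ∈ G) (hl : ∃ z ∈ G, l ⬝ᵥ u < l ⬝ᵥ z) :
    ∃ z ∈ G, IsEdgeOf (convexHull ℝ ↑F) u z ∧ l ⬝ᵥ u < l ⬝ᵥ z := by
  induction hn : #G using Nat.strong_induction_on generalizing G l with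
  | _ n ih =>
  obtain ⟨G', hG'G, hG', huG', ⟨z, hzG', hz⟩, himp⟩ := hG.exists_subset_forall_lt hF hu hl
  have hzu : z ≠ u := fun h ↦ hz.ne (h ▸ rfl)
  by_cases hcard : #G' ≤ 2
  · have hpair : G' = {u, z} := (eq_of_subset_of_card_le (insert_subset huG'
      (singleton_subset_iff.2 hzG')) (by rw [card_pair hzu.symm]; exact hcard)).symm
    exact ⟨z, hG'G hzG', (hpair ▸ hG').isEdgeOf hzu.symm, hz⟩
  obtain ⟨l', hl', b, hbG', hbu, hb⟩ :=
    exists_dotProduct_lt_and_le (fun x hx ↦ hF x (hG'.subset hx)) huG' (by omega)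
  obtain ⟨G'', hG''G', hG'', huG'', hl'', himp''⟩ := hG'.exists_subset_forall_lt hF huG' hl'
  have hlt : #G'' < n := hn ▸ (card_lt_card ((ssubset_iff_of_subset hG''G').2
    ⟨b, hbG', fun hbG'' ↦ (himp'' b hbG'' hbu).not_ge hb⟩)).trans_le (card_le_card hG'G)
  obtain ⟨y, hyG'', hedge, hy⟩ := ih _ hlt hG'' huG'' hl'' rfl
  exact ⟨y, hG'G (hG''G' hyG''), hedge, himp y (hG''G' hyG'') fun h ↦ hy.ne (h ▸ rfl)⟩

/-- Follow an improving edge, for the functional exposing `v`, from the best point inside `S`. -/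
theorem exists_isEdgeOf_mem_not_mem (hF : ∀ x ∈ F, IsBinary x) (hG : IsExposedSubset F G)
    {S : Set (Fin d → ℝ)} (hu : u ∈ G) (huS : u ∈ S) (hv : v ∈ G) (hvS : v ∉ S) :
    ∃ z ∈ G, ∃ z' ∈ G, z ∈ S ∧ z' ∉ S ∧ IsEdgeOf (convexHull ℝ ↑F) z z' := by
  classical
  obtain ⟨c, hc⟩ := isExposedSubset_singleton (fun x hx ↦ hF x (hG.subset hx)) hv
  obtain ⟨y, hy, hymax⟩ := (G.filter (· ∈ S)).exists_max_image (c ⬝ᵥ ·) ⟨u, mem_filter.2 ⟨hu, huS⟩⟩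
  rw [mem_filter] at hy
  have hyv : c ⬝ᵥ y < c ⬝ᵥ v :=
    lt_of_maximizers_eq_singleton hc hy.1 fun h ↦ hvS (h ▸ hy.2)
  obtain ⟨z, hzG, hedge, hz⟩ := exists_isEdgeOf_dotProduct_lt hF hG hy.1 ⟨v, hv, hyv⟩
  exact ⟨y, hy.1, z, hzG, hy.2, fun hzS ↦ hz.not_ge (hymax z (mem_filter.2 ⟨hzG, hzS⟩)), hedge⟩

end ImprovingEdge

end Faces

section Cube

variable {k : ℕ}

lemma Fin.two_eq_add_one_of_ne {a b : Fin 2} (h : a ≠ b) : a = b + 1 := by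
  revert a b; decide

lemma Fin.two_add_one_ne (a : Fin 2) : a + 1 ≠ a := by
  revert a; decide

def flipAt (j : Fin k) (w : Fin k → Fin 2) : Fin k → Fin 2 := Function.update w j (w j + 1)

@[simp] lemma flipAt_apply_self (j : Fin k) (w : Fin k → Fin 2) : flipAt j w j = w j + 1 := by
  simp [flipAt]

lemma flipAt_apply_of_ne {i j : Fin k} (h : i ≠ j) (w : Fin k → Fin 2) : flipAt j w i = w i :=
  Function.update_of_ne h _ _

lemma flipAt_flipAt (j : Fin k) (w : Fin k → Fin 2) : flipAt j (flipAt j w) = w := by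
  ext1 i
  obtain rfl | h := eq_or_ne i j
  · simp [add_assoc, Fin.isValue]
  · simp [flipAt_apply_of_ne h]

lemma flipAt_ne (j : Fin k) (w : Fin k → Fin 2) : flipAt j w ≠ w := fun h ↦
  Fin.two_add_one_ne (w j) (by simpa using congrFun h j)

lemma flipAt_left_injective {j j' : Fin k} {w : Fin k → Fin 2} (h : flipAt j w = flipAt j' w) :
    j = j' := by
  by_contra hjj'
  have := congrFun h j
  rw [flipAt_apply_self, flipAt_apply_of_ne hjj'] at this
  exact Fin.two_add_one_ne _ this

lemma flipAt_cons_zero (b : Fin 2) (x : Fin k → Fin 2) :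
    flipAt 0 (Fin.cons b x : Fin (k + 1) → Fin 2) = Fin.cons (b + 1) x := by
  simp [flipAt, Fin.update_cons_zero]

lemma flipAt_cons_succ (j : Fin k) (b : Fin 2) (x : Fin k → Fin 2) :
    flipAt j.succ (Fin.cons b x : Fin (k + 1) → Fin 2) = Fin.cons b (flipAt j x) := by
  simp [flipAt, Fin.cons_update]

/-- The edges of the cube leaving `A`, each recorded by its endpoint in `A` and its direction. -/
def cubeBoundary (A : Finset (Fin k → Fin 2)) : Finset ((Fin k → Fin 2) × Fin k) :=
  {p | p.1 ∈ A ∧ flipAt p.2 p.1 ∉ A}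

def cubeSlice (A : Finset (Fin (k + 1) → Fin 2)) (b : Fin 2) : Finset (Fin k → Fin 2) :=
  {x | Fin.cons b x ∈ A}

lemma sum_cube_succ {M : Type*} [AddCommMonoid M] (f : (Fin (k + 1) → Fin 2) → M) :
    ∑ w, f w = ∑ b, ∑ x, f (Fin.cons b x) := by
  rw [← (Fin.consEquiv fun _ ↦ Fin 2).sum_comp, Fintype.sum_prod_type]
  rfl

lemma card_eq_sum_card_cubeSlice (A : Finset (Fin (k + 1) → Fin 2)) :
    #A = ∑ b, #(cubeSlice A b) := by
  calc #A = ∑ w, if w ∈ A then 1 else 0 := by simp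
    _ = ∑ b, #(cubeSlice A b) := by simp only [sum_cube_succ, cubeSlice, card_filter]

lemma cubeSlice_compl (A : Finset (Fin (k + 1) → Fin 2)) (b : Fin 2) :
    cubeSlice Aᶜ b = (cubeSlice A b)ᶜ := by
  ext; simp [cubeSlice]

lemma card_cubeBoundary_succ (A : Finset (Fin (k + 1) → Fin 2)) :
    #(cubeBoundary A) =
      ∑ b, (#(cubeBoundary (cubeSlice A b)) + #(cubeSlice A b \ cubeSlice A (b + 1))) := by
  have hsdiff : ∀ b, #(cubeSlice A b \ cubeSlice A (b + 1)) =
      ∑ x, if Fin.cons b x ∈ A ∧ Fin.cons (b + 1) x ∉ A then 1 else 0 := by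
    intro b
    rw [← card_filter]
    congr 1
    ext
    simp [cubeSlice]
  have hslice : ∀ b, #(cubeBoundary (cubeSlice A b)) =
      ∑ x, ∑ j, if Fin.cons b x ∈ A ∧ Fin.cons b (flipAt j x) ∉ A then 1 else 0 := by
    intro b
    simp only [cubeBoundary, cubeSlice, card_filter, Fintype.sum_prod_type, mem_filter, mem_univ,
      true_and]
  simp only [hsdiff, hslice, ← sum_add_distrib]
  simp only [cubeBoundary, card_filter, Fintype.sum_prod_type, sum_cube_succ,
    Fin.sum_univ_succ (n := k), flipAt_cons_zero, flipAt_cons_succ, add_comm]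

lemma card_image_diag_union_image_cubeBoundary (B A : Finset (Fin k → Fin 2)) :
    #(B.image (fun w ↦ (w, w)) ∪ (cubeBoundary A).image (fun p ↦ (p.1, flipAt p.2 p.1))) =
      #B + #(cubeBoundary A) := by
  rw [card_union_of_disjoint, card_image_of_injective, card_image_of_injective]
  · intro p q h
    simp only [Prod.mk.injEq] at h
    exact Prod.ext h.1 (flipAt_left_injective (h.1 ▸ h.2))
  · exact fun w w' h ↦ (Prod.mk.inj h).1
  · simp only [disjoint_left, mem_image, not_exists, not_and]
    rintro _ ⟨w, -, rfl⟩ p - h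
    simp only [Prod.mk.injEq] at h
    exact flipAt_ne p.2 p.1 (h.2.trans h.1.symm)

/-- Edge-isoperimetric inequality of the hypercube. Slicing along the first coordinate, the
boundary consists of the boundaries of the two slices and of the edges joining them. -/
theorem min_card_le_card_cubeBoundary :
    ∀ {k : ℕ} (A : Finset (Fin k → Fin 2)), min #A #Aᶜ ≤ #(cubeBoundary A)
  | 0, A => by
    have := card_add_card_compl A
    simp only [Fintype.card_unique] at this
    omega
  | k + 1, A => by
    have hA := card_eq_sum_card_cubeSlice A
    have hAc := card_eq_sum_card_cubeSlice Aᶜ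
    have hB := card_cubeBoundary_succ A
    simp only [cubeSlice_compl, Fin.sum_univ_two, show (1 : Fin 2) + 1 = 0 from rfl,
      zero_add] at hA hAc hB
    have := min_card_le_card_cubeBoundary (cubeSlice A 0)
    have := min_card_le_card_cubeBoundary (cubeSlice A 1)
    have := le_card_sdiff (cubeSlice A 1) (cubeSlice A 0)
    have := le_card_sdiff (cubeSlice A 0) (cubeSlice A 1)
    have := card_add_card_compl (cubeSlice A 0)
    have := card_add_card_compl (cubeSlice A 1)
    omega

end Cube

section Projection

variable {d k : ℕ} {F : Finset (Fin d → ℝ)} {ι : Fin k → Fin d} {x y : Fin d → ℝ}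

/-- The projection `π_k` of a binary point, as a vertex of the cube. -/
noncomputable def cubeProj (ι : Fin k → Fin d) (x : Fin d → ℝ) : Fin k → Fin 2 :=
  fun i ↦ if x (ι i) = 0 then 0 else 1

lemma cast_cubeProj_apply (hx : IsBinary x) (i : Fin k) : (cubeProj ι x i : ℝ) = x (ι i) := by
  rcases hx (ι i) with h | h <;> simp [cubeProj, h]

lemma cubeProj_eq_iff (hx : IsBinary x) {w : Fin k → Fin 2} :
    cubeProj ι x = w ↔ ∀ i, x (ι i) = w i := by
  refine ⟨fun h i ↦ h ▸ (cast_cubeProj_apply hx i).symm, fun h ↦ funext fun i ↦ ?_⟩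
  exact Fin.val_injective (Nat.cast_injective (R := ℝ) ((cast_cubeProj_apply hx i).trans (h i)))

noncomputable def fiber (F : Finset (Fin d → ℝ)) (ι : Fin k → Fin d) (w : Fin k → Fin 2) :
    Finset (Fin d → ℝ) :=
  {x ∈ F | cubeProj ι x = w}

lemma isExposedSubset_fiber (hF : ∀ x ∈ F, IsBinary x) (hx : x ∈ F) :
    IsExposedSubset F (fiber F ι (cubeProj ι x)) := by
  convert isExposedSubset_filter_forall_eq hF hx (univ.image ι) using 1
  ext y
  simp only [fiber, mem_filter, mem_image, mem_univ, true_and, forall_exists_index,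
    forall_apply_eq_imp_iff]
  refine and_congr_right fun hy ↦ ?_
  simp [cubeProj_eq_iff (hF y hy), cast_cubeProj_apply (hF x hx)]

lemma setOf_isVertexOf_eq_fiber (hF : ∀ x ∈ F, IsBinary x) (w : Fin k → Fin 2) :
    {v | IsVertexOf (convexHull ℝ ↑F) v ∧ ∀ i, v (ι i) = (w i : ℝ)} = ↑(fiber F ι w) :=
  Set.ext fun v ↦ ⟨fun ⟨hv, h⟩ ↦ mem_filter.2 ⟨hv.mem, (cubeProj_eq_iff (hF v hv.mem)).2 h⟩,
    fun hv ↦ ⟨isVertexOf_convexHull hF (mem_filter.1 hv).1,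
      (cubeProj_eq_iff (hF v (mem_filter.1 hv).1)).1 (mem_filter.1 hv).2⟩⟩

/-- Follow an improving edge, within the face freezing the other projected coordinates, for the
functional reading coordinate `ι j`. -/
lemma exists_isEdgeOf_mem_fiber_flipAt (hF : ∀ x ∈ F, IsBinary x) (hy : y ∈ F) (j : Fin k)
    (hne : (fiber F ι (flipAt j (cubeProj ι y))).Nonempty) :
    ∃ z ∈ fiber F ι (flipAt j (cubeProj ι y)), IsEdgeOf (convexHull ℝ ↑F) z y := by
  classical
  obtain ⟨u, hu⟩ := hne
  rw [fiber, mem_filter] at hu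
  have huj : u (ι j) ≠ y (ι j) := by
    rw [← cast_cubeProj_apply (hF u hu.1), ← cast_cubeProj_apply (hF y hy), hu.2,
      flipAt_apply_self, Ne, Nat.cast_inj, Fin.val_inj]
    exact Fin.two_add_one_ne _
  set G := {x ∈ F | ∀ i ∈ (univ.erase j).image ι, x i = y i}
  have huG : u ∈ G := by
    refine mem_filter.2 ⟨hu.1, fun _ hi ↦ ?_⟩
    obtain ⟨i, hij, rfl⟩ := mem_image.1 hi
    rw [← cast_cubeProj_apply (hF u hu.1), ← cast_cubeProj_apply (hF y hy), hu.2,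
      flipAt_apply_of_ne (mem_erase.1 hij).1]
  set l : Fin d → ℝ := Pi.single (ι j) (u (ι j) - y (ι j))
  have hl : l ⬝ᵥ y < l ⬝ᵥ u := by
    simp only [l, single_dotProduct]
    nlinarith [sq_pos_of_ne_zero (sub_ne_zero.2 huj)]
  obtain ⟨z, hzG, hedge, hz⟩ := exists_isEdgeOf_dotProduct_lt hF
    (isExposedSubset_filter_forall_eq hF hy _) (mem_filter.2 ⟨hy, fun _ _ ↦ rfl⟩) ⟨u, huG, hl⟩
  rw [mem_filter] at hzG
  have hzj : z (ι j) ≠ y (ι j) := fun h ↦ hz.ne (by simp [l, single_dotProduct, h])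
  refine ⟨z, mem_filter.2 ⟨hzG.1, funext fun i ↦ ?_⟩, hedge.symm⟩
  by_cases hij : i = j
  · subst hij
    rw [flipAt_apply_self]
    refine Fin.two_eq_add_one_of_ne fun h ↦ hzj ?_
    rw [← cast_cubeProj_apply (hF z hzG.1), ← cast_cubeProj_apply (hF y hy), h]
  · rw [flipAt_apply_of_ne hij]
    simp only [cubeProj, hzG.2 (ι i) (mem_image_of_mem ι (mem_erase.2 ⟨hij, mem_univ i⟩))]

end Projection

section Counting

variable {d k : ℕ} {F : Finset (Fin d → ℝ)} {ι : Fin k → Fin d}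

/-- A fiber meeting `T` without lying in it contains an edge leaving `T`, and each cube edge
leaving `{w | fiber w ⊆ T}` lifts to an edge leaving `T` between the two fibers; the fibers of
their endpoints tell these edges apart. -/
theorem card_add_card_cubeBoundary_le_cutCard (hF : ∀ x ∈ F, IsBinary x)
    (hne : ∀ w, (fiber F ι w).Nonempty) (T : Finset (Fin d → ℝ)) :
    #{w | (∃ x ∈ T, x ∈ fiber F ι w) ∧ ¬fiber F ι w ⊆ T} +
      #(cubeBoundary {w | fiber F ι w ⊆ T}) ≤ cutCard (convexHull ℝ ↑F) (T : Set (Fin d → ℝ)) := by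
  classical
  set full : Finset (Fin k → Fin 2) := {w | fiber F ι w ⊆ T}
  set split : Finset (Fin k → Fin 2) := {w | (∃ x ∈ T, x ∈ fiber F ι w) ∧ ¬fiber F ι w ⊆ T}
  set C := {e : (Fin d → ℝ) × (Fin d → ℝ) |
    IsEdgeOf (convexHull ℝ ↑F) e.1 e.2 ∧ e.1 ∈ (T : Set (Fin d → ℝ)) ∧ e.2 ∉ (T : Set _)}
  have hC : C.Finite := (F ×ˢ F).finite_toSet.subset fun e he ↦
    mem_coe.2 (mem_product.2 ⟨he.1.left_mem, he.1.right_mem⟩)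
  set D := split.image (fun w ↦ (w, w)) ∪
    (cubeBoundary full).image (fun p ↦ (p.1, flipAt p.2 p.1))
  have hDC : (D : Set _) ⊆ (fun e ↦ (cubeProj ι e.1, cubeProj ι e.2)) '' C := by
    intro p hp
    rcases mem_union.1 hp with hp | hp
    · obtain ⟨w, hw, rfl⟩ := mem_image.1 hp
      obtain ⟨⟨u, huT, hu⟩, hnot⟩ := (mem_filter.1 hw).2
      obtain ⟨v, hv, hvT⟩ := not_subset.1 hnot
      have hG := isExposedSubset_fiber (ι := ι) hF (mem_filter.1 hu).1
      rw [(mem_filter.1 hu).2] at hG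
      obtain ⟨z, hz, z', hz', hzT, hz'T, hedge⟩ :=
        exists_isEdgeOf_mem_not_mem hF hG hu huT hv hvT
      exact ⟨(z, z'), ⟨hedge, hzT, hz'T⟩, by simp [(mem_filter.1 hz).2, (mem_filter.1 hz').2]⟩
    · obtain ⟨⟨w, j⟩, hwj, rfl⟩ := mem_image.1 hp
      obtain ⟨hw, hwj⟩ := (mem_filter.1 hwj).2
      simp only [full, mem_filter, mem_univ, true_and] at hw hwj
      obtain ⟨v, hv, hvT⟩ := not_subset.1 hwj
      obtain ⟨hvF, hvw⟩ := mem_filter.1 hv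
      obtain ⟨z, hz, hedge⟩ := exists_isEdgeOf_mem_fiber_flipAt hF hvF j
        (by rw [hvw, flipAt_flipAt]; exact hne w)
      rw [hvw, flipAt_flipAt] at hz
      exact ⟨(z, v), ⟨hedge, hw hz, hvT⟩, by simp [(mem_filter.1 hz).2, hvw]⟩
  calc #split + #(cubeBoundary full)
        = (D : Set ((Fin k → Fin 2) × (Fin k → Fin 2))).ncard := by
          rw [Set.ncard_coe_finset, card_image_diag_union_image_cubeBoundary]
    _ ≤ (_ '' C).ncard := Set.ncard_le_ncard hDC (hC.image _)
    _ ≤ C.ncard := Set.ncard_image_le hC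

/-- Counting through the fibers: `T` is covered by the fibers it meets, its complement by the
fibers not inside it, and the cube's isoperimetric inequality bounds the smaller side. -/
theorem card_le_mul_cutCard (hF : ∀ x ∈ F, IsBinary x) (hne : ∀ w, (fiber F ι w).Nonempty)
    {c : ℕ} (hc : ∀ w, #(fiber F ι w) ≤ c) {T : Finset (Fin d → ℝ)} (hTF : T ⊆ F)
    (hT : 2 * #T ≤ #F) : #T ≤ c * cutCard (convexHull ℝ ↑F) (T : Set (Fin d → ℝ)) := by
  classical
  set full : Finset (Fin k → Fin 2) := {w | fiber F ι w ⊆ T}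
  set split : Finset (Fin k → Fin 2) := {w | (∃ x ∈ T, x ∈ fiber F ι w) ∧ ¬fiber F ι w ⊆ T}
  have hfib : ∀ s ⊆ F, ∀ w, #{x ∈ s | cubeProj ι x = w} ≤ c := fun s hs w ↦
    (card_le_card (filter_subset_filter _ hs)).trans (hc w)
  have hin : #T ≤ c * (#full + #split) := by
    refine (card_le_mul_card_image T c fun w _ ↦ hfib T hTF w).trans
      (Nat.mul_le_mul_left c ((card_le_card fun w hw ↦ ?_).trans (card_union_le full split)))
    obtain ⟨x, hx, rfl⟩ := mem_image.1 hw
    by_cases h : fiber F ι (cubeProj ι x) ⊆ T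
    · exact mem_union_left _ (mem_filter.2 ⟨mem_univ _, h⟩)
    · exact mem_union_right _ (mem_filter.2 ⟨mem_univ _, ⟨x, hx, mem_filter.2 ⟨hTF hx, rfl⟩⟩, h⟩)
  have hout : #(F \ T) ≤ c * #fullᶜ := by
    refine (card_le_mul_card_image (F \ T) c fun w _ ↦ hfib _ sdiff_subset w).trans
      (Nat.mul_le_mul_left c (card_le_card fun w hw ↦ ?_))
    obtain ⟨x, hx, rfl⟩ := mem_image.1 hw
    rw [mem_sdiff] at hx
    simpa [full] using fun h ↦ hx.2 (h (mem_filter.2 ⟨hx.1, rfl⟩))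
  have hcut : #split + #(cubeBoundary full) ≤ cutCard (convexHull ℝ ↑F) (T : Set (Fin d → ℝ)) :=
    card_add_card_cubeBoundary_le_cutCard hF hne T
  have hiso := min_card_le_card_cubeBoundary full
  have hT' : #T ≤ #(F \ T) := by rw [card_sdiff_of_subset hTF]; omega
  calc #T ≤ min (c * (#full + #split)) (c * #fullᶜ) := le_min hin (hT'.trans hout)
    _ = c * min (#full + #split) #fullᶜ := min_mul_mul_left _ _ _
    _ ≤ c * cutCard (convexHull ℝ ↑F) (T : Set (Fin d → ℝ)) := Nat.mul_le_mul_left c (by omega)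

end Counting

theorem projection_lemma_general
    (d k c : ℕ) (F : Finset (Fin d → ℝ)) (hF : ∀ x ∈ F, ∀ i, x i = 0 ∨ x i = 1)
    (P : Set (Fin d → ℝ)) (hP : P = convexHull ℝ (F : Set (Fin d → ℝ)))
    (ι : Fin k → Fin d)
    (hsurj : ∀ w : Fin k → Fin 2, ∃ v, IsVertexOf P v ∧ ∀ i, v (ι i) = (w i : ℝ))
    (hfiber : ∀ w : Fin k → Fin 2,
      {v | IsVertexOf P v ∧ ∀ i, v (ι i) = (w i : ℝ)}.ncard ≤ c) :
    ExpansionAtLeast P (1 / (2 * c)) := by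
  subst hP
  have hne : ∀ w, (fiber F ι w).Nonempty := fun w ↦ by
    obtain ⟨v, hv⟩ := hsurj w
    exact ⟨v, (Set.ext_iff.1 (setOf_isVertexOf_eq_fiber hF w) v).1 hv⟩
  have hc : ∀ w, #(fiber F ι w) ≤ c := fun w ↦ by
    simpa [setOf_isVertexOf_eq_fiber hF w] using hfiber w
  intro S hS _ hS2
  rw [polyVerts_convexHull hF] at hS hS2
  obtain ⟨T, rfl⟩ := (F.finite_toSet.subset hS).exists_finset_coe
  simp only [Set.ncard_coe_finset] at hS2 ⊢
  have hcut := card_le_mul_cutCard hF hne hc (coe_subset.1 hS) hS2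
  set E := cutCard (convexHull ℝ ↑F) (T : Set (Fin d → ℝ))
  have hc2 : 1 / (2 * c : ℝ) * c ≤ 1 := by
    rcases eq_or_ne (c : ℝ) 0 with h | h
    · simp [h]
    · rw [one_div, mul_inv, mul_assoc, inv_mul_cancel₀ h]
      norm_num
  calc 1 / (2 * c : ℝ) * #T ≤ 1 / (2 * c) * c * E := by
        rw [mul_assoc]
        gcongr
        exact_mod_cast hcut
    _ ≤ E := mul_le_of_le_one_left E.cast_nonneg hc2

/-- Projection lemma: if `P ⊂ ℝ^d` is a 0/1 polytope and there are `k` coordinates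
(given by an injection `ι : Fin k → Fin d`) such that the projection onto these
coordinates hits every vertex of the `k`-cube and every vertex of the `k`-cube has
at most `c` preimage vertices of `P`, then the edge expansion of the graph of `P`
is at least `1/(2c)`. -/
theorem projection_lemma
    (d k c : ℕ) (F : Finset (Fin d → ℝ)) (hF : ∀ x ∈ F, ∀ i, x i = 0 ∨ x i = 1)
    (P : Set (Fin d → ℝ)) (hP : P = convexHull ℝ (F : Set (Fin d → ℝ)))
    (ι : Fin k → Fin d) (hι : Function.Injective ι)
    (hsurj : ∀ w : Fin k → Fin 2, ∃ v, IsVertexOf P v ∧ ∀ i, v (ι i) = (w i : ℝ))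
    (hfiber : ∀ w : Fin k → Fin 2,
      {v | IsVertexOf P v ∧ ∀ i, v (ι i) = (w i : ℝ)}.ncard ≤ c) :
    ExpansionAtLeast P (1 / (2 * c)) :=
  projection_lemma_general d k c F hF P hP ι hsurj hfiber
end
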